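/- Let $q \geq 2$ and let $p(x) \in \mathbb{Z}[x]$ be a polynomial of degree $h \geq 2$ with all coefficients nonnegative and positive leading coefficient. Then there exists a constant $c_1 > 0$, depending only on $p$ and $q$, such that for all integers $n \geq 2$, $s_q(p(n))/s_q(n) \leq c_1 (\log_q n)^{1 - 1/h}$. -/
import Mathlib

/-- `digitSum q n` is the sum of digits of `n` in base `q`. -/
def digitSum (q n : ℕ) : ℕ := (Nat.digits q n).sum

lemma digitSum_def {q : ℕ} (hq : 2 ≤ q) {n : ℕ} (hn : n ≠ 0) :
    digitSum q n = n % q + digitSum q (n / q) := by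
  unfold digitSum
  rw [Nat.digits_def' (by omega : 1 < q) (Nat.pos_of_ne_zero hn), List.sum_cons]

lemma digitSum_of_lt {q c : ℕ} (hq : 2 ≤ q) (hc : c < q) : digitSum q c = c := by
  rcases Nat.eq_zero_or_pos c with rfl | hc0
  · simp [digitSum]
  · rw [digitSum_def hq hc0.ne', Nat.mod_eq_of_lt hc, Nat.div_eq_of_lt hc]
    simp [digitSum]

lemma digitSum_pos {q : ℕ} (hq : 2 ≤ q) {n : ℕ} (hn : n ≠ 0) : 0 < digitSum q n := by
  induction n using Nat.strong_induction_on with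
  | _ n ih =>
    rw [digitSum_def hq hn]
    rcases Nat.eq_zero_or_pos (n % q) with h | h
    · have hd : n / q ≠ 0 := by
        intro h0
        have := Nat.div_add_mod n q
        rw [h0, Nat.mul_zero] at this
        omega
      have := ih (n / q) (Nat.div_lt_self (Nat.pos_of_ne_zero hn) (by omega)) hd
      omega
    · omega

lemma digitSum_add_le {q : ℕ} (hq : 2 ≤ q) (a b : ℕ) :
    digitSum q (a + b) ≤ digitSum q a + digitSum q b := by
  suffices H : ∀ N a b, a + b = N → digitSum q (a + b) ≤ digitSum q a + digitSum q b by
    exact H _ a b rfl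
  intro N
  induction N using Nat.strong_induction_on with
  | _ N ih =>
    intro a b hN
    rcases Nat.eq_zero_or_pos a with rfl | ha
    · simp
    rcases Nat.eq_zero_or_pos b with rfl | hb
    · simp
    have hq1 : 1 < q := by omega
    set c := (a % q + b % q) / q with hc
    have hcle : c ≤ 1 := by
      have h1 := Nat.mod_lt a (show 0 < q by omega)
      have h2 := Nat.mod_lt b (show 0 < q by omega)
      rw [hc]
      exact Nat.lt_succ_iff.mp (Nat.div_lt_of_lt_mul (by omega))
    have hdiv : (a + b) / q = a / q + b / q + c := by
      conv_lhs => rw [← Nat.div_add_mod a q, ← Nat.div_add_mod b q]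
      rw [show q * (a / q) + a % q + (q * (b / q) + b % q)
          = (a % q + b % q) + (a / q + b / q) * q by ring]
      rw [Nat.add_mul_div_right _ _ (by omega : 0 < q)]
      omega
    have haq : a / q < a := Nat.div_lt_self ha hq1
    have hbq : b / q < b := Nat.div_lt_self hb hq1
    have h1 : digitSum q (a / q + (b / q + c)) ≤ digitSum q (a / q) + digitSum q (b / q + c) :=
      ih _ (by omega) _ _ rfl
    have h2 : digitSum q (b / q + c) ≤ digitSum q (b / q) + digitSum q c :=
      ih _ (by omega) _ _ rfl
    have h3 : digitSum q c = c := digitSum_of_lt hq (by omega)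
    have hmod : a % q + b % q = q * c + (a + b) % q := by
      rw [Nat.add_mod a b q, hc]
      exact (Nat.div_add_mod (a % q + b % q) q).symm
    have key : digitSum q (a + b) = (a + b) % q + digitSum q (a / q + (b / q + c)) := by
      rw [digitSum_def hq (by omega : a + b ≠ 0), hdiv, add_assoc]
    have hA : digitSum q a = a % q + digitSum q (a / q) := digitSum_def hq (by omega)
    have hB : digitSum q b = b % q + digitSum q (b / q) := digitSum_def hq (by omega)
    have hqc : c ≤ q * c := Nat.le_mul_of_pos_left c (by omega)
    omega

lemma digitSum_base_mul {q : ℕ} (hq : 2 ≤ q) (a : ℕ) : digitSum q (q * a) = digitSum q a := by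
  rcases Nat.eq_zero_or_pos a with rfl | ha
  · simp
  · rw [digitSum_def hq (by positivity : q * a ≠ 0), Nat.mul_mod_right,
      Nat.mul_div_cancel_left a (by omega : 0 < q), Nat.zero_add]

lemma digitSum_smul_le {q : ℕ} (hq : 2 ≤ q) (r n : ℕ) :
    digitSum q (r * n) ≤ r * digitSum q n := by
  induction r with
  | zero => simp [digitSum]
  | succ r ih =>
    calc digitSum q ((r + 1) * n) = digitSum q (r * n + n) := by ring_nf
    _ ≤ digitSum q (r * n) + digitSum q n := digitSum_add_le hq _ _
    _ ≤ r * digitSum q n + digitSum q n := by omega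
    _ = (r + 1) * digitSum q n := by ring

lemma digitSum_mul_le {q : ℕ} (hq : 2 ≤ q) (m n : ℕ) :
    digitSum q (m * n) ≤ digitSum q m * digitSum q n := by
  induction m using Nat.strong_induction_on with
  | _ m ih =>
    rcases Nat.eq_zero_or_pos m with rfl | hm
    · simp [digitSum]
    have hsplit : m * n = q * (m / q * n) + m % q * n := by
      conv_lhs => rw [← Nat.div_add_mod m q]
      ring
    calc digitSum q (m * n) = digitSum q (q * (m / q * n) + m % q * n) := by rw [hsplit]
      _ ≤ digitSum q (q * (m / q * n)) + digitSum q (m % q * n) := digitSum_add_le hq _ _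
      _ = digitSum q (m / q * n) + digitSum q (m % q * n) := by rw [digitSum_base_mul hq]
      _ ≤ digitSum q (m / q) * digitSum q n + m % q * digitSum q n := by
          have h1 := ih (m / q) (Nat.div_lt_self hm (by omega))
          have h2 := digitSum_smul_le hq (m % q) n
          omega
      _ = (m % q + digitSum q (m / q)) * digitSum q n := by ring
      _ = digitSum q m * digitSum q n := by rw [← digitSum_def hq (by omega)]

lemma digitSum_pow_le {q : ℕ} (hq : 2 ≤ q) (n k : ℕ) :
    digitSum q (n ^ k) ≤ digitSum q n ^ k := by
  induction k with
  | zero => simp [pow_zero, digitSum_of_lt hq (by omega : 1 < q)]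
  | succ k ih =>
    calc digitSum q (n ^ (k + 1)) = digitSum q (n ^ k * n) := by rw [pow_succ]
      _ ≤ digitSum q (n ^ k) * digitSum q n := digitSum_mul_le hq _ _
      _ ≤ digitSum q n ^ k * digitSum q n := Nat.mul_le_mul_right _ ih
      _ = digitSum q n ^ (k + 1) := by rw [pow_succ]

lemma digitSum_le_log {q : ℕ} (hq : 2 ≤ q) (m : ℕ) :
    digitSum q m ≤ (q - 1) * (Nat.log q m + 1) := by
  rcases Nat.eq_zero_or_pos m with rfl | hm
  · simp [digitSum]
  have hlen : (Nat.digits q m).length = Nat.log q m + 1 :=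
    Nat.digits_len q m (by omega) hm.ne'
  have := List.sum_le_card_nsmul (Nat.digits q m) (q - 1)
    (fun x hx => by have := Nat.digits_lt_base (by omega : 1 < q) hx; omega)
  rw [hlen, smul_eq_mul] at this
  calc digitSum q m ≤ (Nat.log q m + 1) * (q - 1) := this
    _ = (q - 1) * (Nat.log q m + 1) := by ring

lemma eval_toNat_eq (p : Polynomial ℤ) (hcoeff : ∀ i, 0 ≤ p.coeff i) (n : ℕ) :
    (p.eval (n : ℤ)).toNat
      = ∑ i ∈ Finset.range (p.natDegree + 1), (p.coeff i).toNat * n ^ i := by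
  have : p.eval (n : ℤ)
      = ((∑ i ∈ Finset.range (p.natDegree + 1), (p.coeff i).toNat * n ^ i : ℕ) : ℤ) := by
    rw [Polynomial.eval_eq_sum_range]
    push_cast
    refine Finset.sum_congr rfl fun i _ => ?_
    rw [Int.toNat_of_nonneg (hcoeff i)]
  rw [this, Int.toNat_natCast]

lemma nat_bounds {q : ℕ} (hq : 2 ≤ q) (p : Polynomial ℤ)
    (hcoeff : ∀ i, 0 ≤ p.coeff i) (hlead : 0 < p.leadingCoeff) (n : ℕ) (hn : 1 ≤ n) :
    digitSum q ((p.eval (n : ℤ)).toNat)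
        ≤ (∑ i ∈ Finset.range (p.natDegree + 1), (p.coeff i).toNat)
            * (digitSum q n) ^ p.natDegree
      ∧ (p.eval (n : ℤ)).toNat
        ≤ (∑ i ∈ Finset.range (p.natDegree + 1), (p.coeff i).toNat) * n ^ p.natDegree
      ∧ n ^ p.natDegree ≤ (p.eval (n : ℤ)).toNat := by
  set H := p.natDegree with hH
  set c : ℕ → ℕ := fun i => (p.coeff i).toNat with hc
  rw [eval_toNat_eq p hcoeff n]
  have hℓ : 1 ≤ digitSum q n := digitSum_pos hq (by omega)
  refine ⟨?_, ?_, ?_⟩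
  · calc digitSum q (∑ i ∈ Finset.range (H + 1), c i * n ^ i)
        ≤ ∑ i ∈ Finset.range (H + 1), digitSum q (c i * n ^ i) :=
          Finset.le_sum_of_subadditive (digitSum q) (by simp [digitSum])
            (digitSum_add_le hq) _ _
      _ ≤ ∑ i ∈ Finset.range (H + 1), c i * (digitSum q n) ^ H := by
          refine Finset.sum_le_sum fun i hi => ?_
          calc digitSum q (c i * n ^ i)
              ≤ digitSum q (c i) * digitSum q (n ^ i) := digitSum_mul_le hq _ _
            _ ≤ c i * digitSum q n ^ i := by
                have h1 : digitSum q (c i) ≤ c i := Nat.digit_sum_le q (c i)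
                have h2 : digitSum q (n ^ i) ≤ digitSum q n ^ i := digitSum_pow_le hq n i
                exact Nat.mul_le_mul h1 h2
            _ ≤ c i * digitSum q n ^ H := by
                have : digitSum q n ^ i ≤ digitSum q n ^ H :=
                  Nat.pow_le_pow_right hℓ (by
                    simpa using Nat.lt_succ_iff.mp (Finset.mem_range.mp hi))
                exact Nat.mul_le_mul_left _ this
      _ = (∑ i ∈ Finset.range (H + 1), c i) * (digitSum q n) ^ H := by
          rw [Finset.sum_mul]
  · calc (∑ i ∈ Finset.range (H + 1), c i * n ^ i)
        ≤ ∑ i ∈ Finset.range (H + 1), c i * n ^ H := by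
          refine Finset.sum_le_sum fun i hi => ?_
          exact Nat.mul_le_mul_left _ (Nat.pow_le_pow_right hn
            (by simpa using Nat.lt_succ_iff.mp (Finset.mem_range.mp hi)))
      _ = (∑ i ∈ Finset.range (H + 1), c i) * n ^ H := by rw [Finset.sum_mul]
  · have hcH : 1 ≤ c H := by
      have : 0 < p.coeff H := by rwa [hH, ← Polynomial.leadingCoeff]
      simp only [hc]
      omega
    calc n ^ H ≤ c H * n ^ H := Nat.le_mul_of_pos_left _ (by omega)
      _ ≤ ∑ i ∈ Finset.range (H + 1), c i * n ^ i :=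
          Finset.single_le_sum (f := fun i => c i * n ^ i)
            (fun i _ => Nat.zero_le _) (Finset.mem_range.mpr (Nat.lt_succ_self H))

set_option maxHeartbeats 1000000 in
theorem stmt_6 (q : ℕ) (hq : 2 ≤ q) (p : Polynomial ℤ)
    (hdeg : 2 ≤ p.natDegree) (hcoeff : ∀ i, 0 ≤ p.coeff i)
    (hlead : 0 < p.leadingCoeff) :
    ∃ c₁ : ℝ, 0 < c₁ ∧ ∀ n : ℕ, 2 ≤ n →
      (digitSum q ((p.eval (n : ℤ)).toNat) : ℝ) / (digitSum q n : ℝ) ≤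
        c₁ * (Real.logb q n) ^ (1 - 1 / (p.natDegree : ℝ)) := by
  set H := p.natDegree with hHdef
  set C : ℕ := ∑ i ∈ Finset.range (H + 1), (p.coeff i).toNat with hCdef
  have hq1 : (1 : ℝ) < q := by exact_mod_cast (by omega : 1 < q)
  have hC1 : 1 ≤ C := by
    have hcH : 1 ≤ (p.coeff H).toNat := by
      have : 0 < p.coeff H := by rwa [hHdef, ← Polynomial.leadingCoeff]
      omega
    calc 1 ≤ (p.coeff H).toNat := hcH
      _ ≤ C := Finset.single_le_sum (f := fun i => (p.coeff i).toNat)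
          (fun i _ => Nat.zero_le _) (Finset.mem_range.mpr (Nat.lt_succ_self H))
  have hCR : (1 : ℝ) ≤ (C : ℝ) := by exact_mod_cast hC1
  have hc0 : 0 < Real.logb q 2 := Real.logb_pos hq1 one_lt_two
  have hlogC : 0 ≤ Real.logb q C := Real.logb_nonneg hq1 hCR
  set K : ℝ := ((q : ℝ) - 1) * ((Real.logb q C + 1) / Real.logb q 2 + H) with hKdef
  have hqR : (1 : ℝ) ≤ (q : ℝ) - 1 := by
    have : (2 : ℝ) ≤ q := by exact_mod_cast hq
    linarith
  have hHR : (2 : ℝ) ≤ (H : ℝ) := by exact_mod_cast hdeg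
  have hK : 0 < K := by
    have h1 : 0 ≤ (Real.logb q C + 1) / Real.logb q 2 := by positivity
    nlinarith
  refine ⟨(C : ℝ) + K, by positivity, fun n hn => ?_⟩
  -- notation
  have hn1 : (1 : ℝ) < (n : ℝ) := by exact_mod_cast (by omega : 1 < n)
  set L : ℝ := Real.logb q n with hLdef
  have hL : 0 < L := Real.logb_pos hq1 hn1
  have hc0L : Real.logb q 2 ≤ L :=
    Real.logb_le_logb_of_le hq1 (by norm_num) (by exact_mod_cast hn)
  set ℓ : ℕ := digitSum q n with hldef
  set M : ℕ := (p.eval (n : ℤ)).toNat with hMdef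
  set A : ℕ := digitSum q M with hAdef
  have hℓ1 : 1 ≤ ℓ := digitSum_pos hq (by omega)
  have hℓR : (1 : ℝ) ≤ (ℓ : ℝ) := by exact_mod_cast hℓ1
  have hℓpos : (0 : ℝ) < (ℓ : ℝ) := by linarith
  obtain ⟨hA1, hM1, hM2⟩ := nat_bounds hq p hcoeff hlead n (by omega)
  -- logarithmic bound on A
  have hAlog : (A : ℝ) ≤ K * L := by
    have b1 : (A : ℝ) ≤ ((q : ℝ) - 1) * ((Nat.log q M : ℝ) + 1) := by
      have := digitSum_le_log hq M
      have hcast : (A : ℝ) ≤ ((q - 1 : ℕ) : ℝ) * ((Nat.log q M : ℕ) + 1 : ℕ) := by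
        exact_mod_cast this
      calc (A : ℝ) ≤ ((q - 1 : ℕ) : ℝ) * ((Nat.log q M : ℕ) + 1 : ℕ) := hcast
        _ = ((q : ℝ) - 1) * ((Nat.log q M : ℝ) + 1) := by
            push_cast [Nat.cast_sub (by omega : 1 ≤ q)]
            ring
    have b2 : (Nat.log q M : ℝ) ≤ Real.logb q M := Real.natLog_le_logb M q
    have hMpos : (1 : ℝ) ≤ (M : ℝ) := by
      have : 1 ≤ M := le_trans (Nat.one_le_two_pow.trans
        (Nat.pow_le_pow_left (by omega) H)) hM2
      exact_mod_cast this
    have b3 : Real.logb q M ≤ Real.logb q C + (H : ℝ) * L := by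
      have hMle : (M : ℝ) ≤ (C : ℝ) * (n : ℝ) ^ H := by exact_mod_cast hM1
      calc Real.logb q M ≤ Real.logb q ((C : ℝ) * (n : ℝ) ^ H) :=
            Real.logb_le_logb_of_le hq1 (by linarith) hMle
        _ = Real.logb q C + (H : ℝ) * L := by
            rw [Real.logb_mul (by linarith : (C : ℝ) ≠ 0)
              (by positivity : (n : ℝ) ^ H ≠ 0), Real.logb_pow]
    have inner : Real.logb q C + ((H : ℝ) * L + 1)
        ≤ ((Real.logb q C + 1) / Real.logb q 2 + H) * L := by
      have hdiv : (1 : ℝ) ≤ L / Real.logb q 2 := (one_le_div hc0).mpr hc0L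
      have h4 : Real.logb q C + 1 ≤ (Real.logb q C + 1) * (L / Real.logb q 2) :=
        le_mul_of_one_le_right (by linarith) hdiv
      have h5 : (Real.logb q C + 1) * (L / Real.logb q 2)
          = (Real.logb q C + 1) / Real.logb q 2 * L := by ring
      nlinarith
    calc (A : ℝ) ≤ ((q : ℝ) - 1) * ((Nat.log q M : ℝ) + 1) := b1
      _ ≤ ((q : ℝ) - 1) * (Real.logb q C + ((H : ℝ) * L + 1)) :=
          mul_le_mul_of_nonneg_left (by linarith) (by linarith)
      _ ≤ ((q : ℝ) - 1) * (((Real.logb q C + 1) / Real.logb q 2 + H) * L) :=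
          mul_le_mul_of_nonneg_left inner (by linarith)
      _ = K * L := by rw [hKdef]; ring
  have he0 : 0 ≤ 1 - 1 / (H : ℝ) := by
    have : 1 / (H : ℝ) ≤ 1 := by
      rw [div_le_one (by linarith)]; linarith
    linarith
  have hLe : 0 < L ^ (1 - 1 / (H : ℝ)) := Real.rpow_pos_of_pos hL _
  by_cases hcase : ((ℓ : ℝ)) ^ (H : ℕ) ≤ L
  · -- small digit sum case
    have hpow : ((ℓ : ℝ)) ^ (H - 1 : ℕ) ≤ L ^ (1 - 1 / (H : ℝ)) := by
      have heq : ((ℓ : ℝ)) ^ (H - 1 : ℕ) = (((ℓ : ℝ)) ^ (H : ℕ)) ^ (1 - 1 / (H : ℝ)) := by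
        rw [← Real.rpow_natCast (ℓ : ℝ) (H - 1), ← Real.rpow_natCast (ℓ : ℝ) H,
          ← Real.rpow_mul (by positivity)]
        congr 1
        have hH0 : (H : ℝ) ≠ 0 := by linarith
        push_cast [Nat.cast_sub (by omega : 1 ≤ H)]
        field_simp
      rw [heq]
      exact Real.rpow_le_rpow (by positivity) hcase he0
    have hdiv : (A : ℝ) / (ℓ : ℝ) ≤ (C : ℝ) * ((ℓ : ℝ)) ^ (H - 1 : ℕ) := by
      rw [div_le_iff₀ hℓpos]
      have : (C : ℝ) * ((ℓ : ℝ)) ^ (H - 1 : ℕ) * (ℓ : ℝ) = (C : ℝ) * ((ℓ : ℝ)) ^ (H : ℕ) := by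
        rw [mul_assoc, ← pow_succ]
        congr 2
        omega
      rw [this]
      exact_mod_cast hA1
    calc (A : ℝ) / (ℓ : ℝ) ≤ (C : ℝ) * ((ℓ : ℝ)) ^ (H - 1 : ℕ) := hdiv
      _ ≤ (C : ℝ) * L ^ (1 - 1 / (H : ℝ)) := by
          exact mul_le_mul_of_nonneg_left hpow (by linarith)
      _ ≤ ((C : ℝ) + K) * L ^ (1 - 1 / (H : ℝ)) := by nlinarith
  · -- large digit sum case
    push_neg at hcase
    have h1H : 0 < 1 / (H : ℝ) := by positivity
    have hroot : L ^ (1 / (H : ℝ)) ≤ (ℓ : ℝ) := by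
      have := Real.rpow_le_rpow hL.le hcase.le h1H.le
      calc L ^ (1 / (H : ℝ)) ≤ (((ℓ : ℝ)) ^ (H : ℕ)) ^ (1 / (H : ℝ)) := this
        _ = (ℓ : ℝ) := by
            rw [← Real.rpow_natCast (ℓ : ℝ) H, ← Real.rpow_mul (by positivity),
              mul_one_div, div_self (by linarith : (H : ℝ) ≠ 0), Real.rpow_one]
    have hrootpos : 0 < L ^ (1 / (H : ℝ)) := Real.rpow_pos_of_pos hL _
    have hd : (A : ℝ) / (ℓ : ℝ) ≤ K * L / L ^ (1 / (H : ℝ)) :=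
      div_le_div₀ (mul_pos hK hL).le hAlog hrootpos hroot
    have heq : K * L / L ^ (1 / (H : ℝ)) = K * L ^ (1 - 1 / (H : ℝ)) := by
      rw [Real.rpow_sub hL, Real.rpow_one, mul_div_assoc]
    calc (A : ℝ) / (ℓ : ℝ) ≤ K * L ^ (1 - 1 / (H : ℝ)) := by rw [← heq]; exact hd
      _ ≤ ((C : ℝ) + K) * L ^ (1 - 1 / (H : ℝ)) := by nlinarith
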